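/- (Theorem 3.2) Suppose n ≥ 2 and the edge set E forms a tree on Fin n. Given univariate pmfs μ_i, bivariate pmfs μ_{ij} for (i,j) ∈ E, ρ ≥ 0, K ≥ 1, vectors a_k ∈ ℝ^n and scalars b_k ∈ ℝ, the optimal value of the polynomial-sized convex program (cp1) equals the Fréchet bound; precisely: the supremum of Σ_{k} Σ_{i ∈ Fin n} Σ_{x ∈ C i} x * a_{k,i} * v^k_i(x) + Σ_k b_k * w_k over all tuples (w, (v^k_i), (v^k_{ij}), (θ_{ij})) satisfying: w_k ≥ 0 for all k and Σ_k w_k = 1; v^k_{ij} : C i × C j → ℝ is nonnegative for each (i,j) ∈ E and k; v^k_i : C i → ℝ for each i and k; Σ_{y ∈ C j} v^k_{ij}(x,y) = v^k_i(x) and Σ_{x ∈ C i} v^k_{ij}(x,y) = v^k_j(y) for each (i,j) ∈ E and k; Σ_{x ∈ C i} v^k_i(x) = w_k for each i and k; Σ_{(x,y)} v^k_{ij}(x,y) = w_k for each (i,j) ∈ E and k; Σ_k v^k_i(x) = μ_i(x) for each i and x; and for each (i,j) ∈ E, θ_{ij} = Σ_k v^k_{ij} vanishes wherever μ_{ij}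 vanishes and I_KL(θ_{ij}, μ_{ij}) ≤ ρ — equals the supremum over θ ∈ Θ_ρ of E_θ[ψ]. -/

import Mathlib

/-!
A joint law θ ∈ Θ_ρ splits along the index k(c) of the affine piece of ψ that is maximal at c
into K sub-measures θ_k; their masses and marginals are a feasible point of (cp1) whose objective
is E_θ[ψ]. Conversely, for a feasible point each family (v^k_i, v^k_ij) is a consistent system of
marginals on the tree, hence the system of marginals of a nonnegative measure Θ_k on Π_i C i:
build Θ_k vertex by vertex along the tree, drawing each new coordinate from the conditional law
v^k_ij(x, ·) / v^k_i(x) of its edge to the part already built. Then θ = Σ_k Θ_k lies in Θ_ρ and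
the objective Σ_k E_{Θ_k}[a_k · c + b_k] is at most E_θ[ψ]. So each value of one set is dominated
by a value of the other, and the suprema agree.
-/

open Finset

noncomputable section

abbrev Pt {n : ℕ} (C : Fin n → Finset ℝ) := (i : Fin n) → {x : ℝ // x ∈ C i}

def IsJoint {n : ℕ} {C : Fin n → Finset ℝ} (θ : Pt C → ℝ) : Prop :=
  (∀ c, 0 ≤ θ c) ∧ ∑ c : Pt C, θ c = 1

def projUni {n : ℕ} {C : Fin n → Finset ℝ} (θ : Pt C → ℝ) (i : Fin n)
    (x : {x : ℝ // x ∈ C i}) : ℝ :=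
  ∑ c : Pt C, if c i = x then θ c else 0

def projBi {n : ℕ} {C : Fin n → Finset ℝ} (θ : Pt C → ℝ) (i j : Fin n)
    (p : {x : ℝ // x ∈ C i} × {y : ℝ // y ∈ C j}) : ℝ :=
  ∑ c : Pt C, if c i = p.1 ∧ c j = p.2 then θ c else 0

def IsPmf {S : Type*} [Fintype S] (p : S → ℝ) : Prop :=
  (∀ s, 0 ≤ p s) ∧ ∑ s, p s = 1

def KL {S : Type*} [Fintype S] (p q : S → ℝ) : ℝ :=
  ∑ s, if 0 < p s then p s * Real.log (p s / q s) else 0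

def Vanishes {S : Type*} (p q : S → ℝ) : Prop := ∀ s, q s = 0 → p s = 0

def treeGraph {n : ℕ} (E : Finset (Fin n × Fin n)) : SimpleGraph (Fin n) :=
  SimpleGraph.fromRel (fun i j => (i, j) ∈ E)

def IsTreeEdges {n : ℕ} (E : Finset (Fin n × Fin n)) : Prop :=
  (∀ e ∈ E, e.1 < e.2) ∧ (treeGraph E).IsTree

def psi {n : ℕ} {C : Fin n → Finset ℝ} {K : ℕ} (a : Fin K → Fin n → ℝ) (b : Fin K → ℝ)
    (c : Pt C) : ℝ :=
  ⨆ k : Fin K, (∑ i, a k i * (c i : ℝ) + b k)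

def InTheta {n : ℕ} {C : Fin n → Finset ℝ} (E : Finset (Fin n × Fin n))
    (μU : (i : Fin n) → {x : ℝ // x ∈ C i} → ℝ)
    (μB : (i j : Fin n) → ({x : ℝ // x ∈ C i} × {y : ℝ // y ∈ C j}) → ℝ)
    (ρ : ℝ) (θ : Pt C → ℝ) : Prop :=
  IsJoint θ ∧ (∀ i, projUni θ i = μU i) ∧
  ∀ i j, (i, j) ∈ E →
    Vanishes (projBi θ i j) (μB i j) ∧ KL (projBi θ i j) (μB i j) ≤ ρ

theorem Fintype.sum_sum_update_swap {ι : Type*} [Fintype ι] [DecidableEq ι] {β : ι → Type*}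
    [∀ i, Fintype (β i)] {M : Type*} [AddCommMonoid M] (l : ι)
    (H : (∀ i, β i) → β l → M) :
    ∑ c, ∑ x, H (Function.update c l x) (c l) = ∑ c, ∑ x, H c x := by
  have hσ : Function.Involutive
      fun cx : (∀ i, β i) × β l => (Function.update cx.1 l cx.2, cx.1 l) :=
    fun ⟨c, x⟩ => by simp
  rw [← Fintype.sum_prod_type' (fun c x => H (Function.update c l x) (c l)),
    ← Fintype.sum_prod_type']
  exact Equiv.sum_comp hσ.toPerm (fun cx => H cx.1 cx.2)

section Marginals

variable {n : ℕ} {C : Fin n → Finset ℝ}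

theorem projUni_eq_sum_mul (θ : Pt C → ℝ) (i : Fin n) (x : C i) :
    projUni θ i x = ∑ c, θ c * if c i = x then 1 else 0 := by
  simp only [projUni, mul_ite, mul_one, mul_zero]

theorem projBi_eq_sum_mul (θ : Pt C → ℝ) (i j : Fin n) (z : C i × C j) :
    projBi θ i j z = ∑ c, θ c * if c i = z.1 ∧ c j = z.2 then 1 else 0 := by
  simp only [projBi, mul_ite, mul_one, mul_zero]

theorem sum_mul_apply_eq_sum_projUni (θ : Pt C → ℝ) (i : Fin n) (f : C i → ℝ) :
    ∑ c, θ c * f (c i) = ∑ x, projUni θ i x * f x := by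
  simp only [projUni, Finset.sum_mul, ite_mul, zero_mul]
  rw [Finset.sum_comm]
  refine Finset.sum_congr rfl fun c _ => ?_
  rw [Finset.sum_ite_eq]
  simp

theorem sum_projUni (θ : Pt C → ℝ) (i : Fin n) : ∑ x, projUni θ i x = ∑ c, θ c := by
  have h := sum_mul_apply_eq_sum_projUni θ i 1
  simp only [Pi.one_apply, mul_one] at h
  exact h.symm

theorem sum_projBi_right (θ : Pt C → ℝ) (i j : Fin n) (x : C i) :
    ∑ y, projBi θ i j (x, y) = projUni θ i x := by
  simp only [projBi, projUni]
  rw [Finset.sum_comm]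
  refine Finset.sum_congr rfl fun c _ => ?_
  by_cases h : c i = x <;> simp [h]

theorem projBi_swap (θ : Pt C → ℝ) (i j : Fin n) (z : C i × C j) :
    projBi θ j i z.swap = projBi θ i j z := by
  simp only [projBi, Prod.fst_swap, Prod.snd_swap, and_comm]

theorem sum_projBi_left (θ : Pt C → ℝ) (i j : Fin n) (y : C j) :
    ∑ x, projBi θ i j (x, y) = projUni θ j y := by
  rw [← sum_projBi_right θ j i y]
  exact Finset.sum_congr rfl fun x _ => (projBi_swap θ i j (x, y)).symm

theorem sum_projBi (θ : Pt C → ℝ) (i j : Fin n) : ∑ z, projBi θ i j z = ∑ c, θ c := by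
  rw [Fintype.sum_prod_type]
  simp only [sum_projBi_right, sum_projUni]

theorem projUni_sum {K : Type*} (s : Finset K) (θ : K → Pt C → ℝ) (i : Fin n) :
    projUni (fun c => ∑ k ∈ s, θ k c) i = fun x => ∑ k ∈ s, projUni (θ k) i x := by
  ext x
  simp only [projUni]
  rw [Finset.sum_comm]
  refine Finset.sum_congr rfl fun c _ => ?_
  split_ifs <;> simp

theorem projBi_sum {K : Type*} (s : Finset K) (θ : K → Pt C → ℝ) (i j : Fin n) :
    projBi (fun c => ∑ k ∈ s, θ k c) i j = fun z => ∑ k ∈ s, projBi (θ k) i j z := by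
  ext z
  simp only [projBi]
  rw [Finset.sum_comm]
  refine Finset.sum_congr rfl fun c _ => ?_
  split_ifs <;> simp

theorem projUni_nonneg {θ : Pt C → ℝ} (hθ : ∀ c, 0 ≤ θ c) (i : Fin n) (x : C i) :
    0 ≤ projUni θ i x :=
  Finset.sum_nonneg fun c _ => by split_ifs; exacts [hθ c, le_rfl]

theorem projBi_nonneg {θ : Pt C → ℝ} (hθ : ∀ c, 0 ≤ θ c) (i j : Fin n) (z : C i × C j) :
    0 ≤ projBi θ i j z :=
  Finset.sum_nonneg fun c _ => by split_ifs; exacts [hθ c, le_rfl]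

theorem eq_zero_of_projUni_eq_zero {θ : Pt C → ℝ} (hθ : ∀ c, 0 ≤ θ c) {i : Fin n}
    {c : Pt C} (h : projUni θ i (c i) = 0) : θ c = 0 := by
  have h' := (Finset.sum_eq_zero_iff_of_nonneg fun c' _ => ?_).mp h c (Finset.mem_univ c)
  · simpa using h'
  · split_ifs
    exacts [hθ c', le_rfl]

end Marginals

section Gluing

variable {n : ℕ} {C : Fin n → Finset ℝ}

def replaceCoord (θ : Pt C → ℝ) (l : Fin n) (κ : Pt C → C l → ℝ) : Pt C → ℝ :=
  fun c => (∑ x, θ (Function.update c l x)) * κ c (c l)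

theorem replaceCoord_nonneg {θ : Pt C → ℝ} (hθ : ∀ c, 0 ≤ θ c) {l : Fin n}
    {κ : Pt C → C l → ℝ} (hκ : ∀ c x, 0 ≤ κ c x) (c : Pt C) :
    0 ≤ replaceCoord θ l κ c :=
  mul_nonneg (Finset.sum_nonneg fun _ _ => hθ _) (hκ c (c l))

theorem sum_replaceCoord_mul (θ : Pt C → ℝ) {l : Fin n} {κ : Pt C → C l → ℝ}
    (hκ : ∀ c x, κ (Function.update c l x) = κ c) (F : Pt C → ℝ) :
    ∑ c, replaceCoord θ l κ c * F c =
      ∑ c, θ c * ∑ x, κ c x * F (Function.update c l x) := by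
  simp only [replaceCoord, Finset.sum_mul, Finset.mul_sum]
  simpa [hκ, mul_assoc] using
    Fintype.sum_sum_update_swap l fun c y => θ c * (κ c y * F (Function.update c l y))

theorem sum_replaceCoord_mul_of_forall_update_eq {θ : Pt C → ℝ} {l : Fin n}
    {κ : Pt C → C l → ℝ} (hκ : ∀ c x, κ (Function.update c l x) = κ c)
    (hmass : ∀ c, θ c * ∑ x, κ c x = θ c) {F : Pt C → ℝ}
    (hF : ∀ c x, F (Function.update c l x) = F c) :
    ∑ c, replaceCoord θ l κ c * F c = ∑ c, θ c * F c := by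
  rw [sum_replaceCoord_mul θ hκ]
  refine Finset.sum_congr rfl fun c _ => ?_
  simp only [hF, ← Finset.sum_mul, ← mul_assoc, hmass]

theorem projUni_replaceCoord_of_ne {θ : Pt C → ℝ} {l : Fin n} {κ : Pt C → C l → ℝ}
    (hκ : ∀ c x, κ (Function.update c l x) = κ c) (hmass : ∀ c, θ c * ∑ x, κ c x = θ c)
    {i : Fin n} (hi : i ≠ l) : projUni (replaceCoord θ l κ) i = projUni θ i := by
  ext x
  simp only [projUni_eq_sum_mul]
  exact sum_replaceCoord_mul_of_forall_update_eq hκ hmass fun c y => by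
    rw [Function.update_of_ne hi]

theorem projBi_replaceCoord_of_ne {θ : Pt C → ℝ} {l : Fin n} {κ : Pt C → C l → ℝ}
    (hκ : ∀ c x, κ (Function.update c l x) = κ c) (hmass : ∀ c, θ c * ∑ x, κ c x = θ c)
    {i j : Fin n} (hi : i ≠ l) (hj : j ≠ l) :
    projBi (replaceCoord θ l κ) i j = projBi θ i j := by
  ext z
  simp only [projBi_eq_sum_mul]
  exact sum_replaceCoord_mul_of_forall_update_eq hκ hmass fun c y => by
    rw [Function.update_of_ne hi, Function.update_of_ne hj]

section ConditionalKernel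

/-- Where `p (c j) = 0` the kernel is `0`; such `c` carry no mass under any `θ ≥ 0` whose
`j`-marginal is `p`. -/
def condKernel {j l : Fin n} (p : C j → ℝ) (q : C j × C l → ℝ) : Pt C → C l → ℝ :=
  fun c x => q (c j, x) / p (c j)

variable {θ : Pt C → ℝ} {j l : Fin n} {p : C j → ℝ} {q : C j × C l → ℝ}

theorem condKernel_update (hjl : j ≠ l) (c : Pt C) (x : C l) :
    condKernel p q (Function.update c l x) = condKernel p q c := by
  ext y
  simp only [condKernel, Function.update_of_ne hjl]

theorem mul_sum_condKernel (hθ : ∀ c, 0 ≤ θ c) (hθj : projUni θ j = p)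
    (hrow : ∀ y, ∑ x, q (y, x) = p y) (c : Pt C) :
    θ c * ∑ x, condKernel p q c x = θ c := by
  simp only [condKernel]
  rw [← Finset.sum_div, hrow]
  by_cases hp : p (c j) = 0
  · rw [eq_zero_of_projUni_eq_zero hθ (hθj ▸ hp), zero_mul]
  · rw [div_self hp, mul_one]

theorem projBi_replaceCoord_condKernel (hjl : j ≠ l) (hθj : projUni θ j = p)
    (hq : ∀ z, 0 ≤ q z) (hrow : ∀ y, ∑ x, q (y, x) = p y) :
    projBi (replaceCoord θ l (condKernel p q)) j l = q := by
  ext ⟨y, x⟩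
  have hq0 : p y = 0 → q (y, x) = 0 := fun hp =>
    (Finset.sum_eq_zero_iff_of_nonneg fun x' _ => hq (y, x')).mp ((hrow y).trans hp) x
      (Finset.mem_univ x)
  rw [projBi_eq_sum_mul, sum_replaceCoord_mul θ (condKernel_update hjl)]
  simp only [condKernel, Function.update_of_ne hjl, Function.update_self, mul_ite, mul_one,
    mul_zero, ite_and, Finset.sum_ite_irrel, Finset.sum_ite_eq', Finset.mem_univ, if_true,
    Finset.sum_const_zero]
  calc ∑ c, (if c j = y then θ c * (q (c j, x) / p (c j)) else 0)
      = ∑ c, (if c j = y then θ c else 0) * (q (y, x) / p y) :=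
        Finset.sum_congr rfl fun c _ => by split_ifs with h <;> simp [h]
    _ = p y * (q (y, x) / p y) := by rw [← Finset.sum_mul, ← hθj]; rfl
    _ = q (y, x) := by
        by_cases hp : p y = 0
        · simp [hp, hq0 hp]
        · field_simp

end ConditionalKernel

variable (G : SimpleGraph (Fin n)) (p : ∀ i, C i → ℝ) (q : ∀ i j, C i × C j → ℝ)

/-- A measure glued along the subtree spanned by `S`. `F` records the edges glued so far; the count
`F.card + 1 = S.card` forces `F` to be every edge of the tree once `S = univ`. -/
structure IsPartialGluing (S : Finset (Fin n)) (F : Finset (Sym2 (Fin n))) (θ : Pt C → ℝ) :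
    Prop where
  nonneg : ∀ c, 0 ≤ θ c
  mem_edgeSet : ∀ e ∈ F, e ∈ G.edgeSet
  mem_of_mem_edge : ∀ e ∈ F, ∀ i ∈ e, i ∈ S
  card_add_one : F.card + 1 = S.card
  projUni_eq : ∀ i ∈ S, projUni θ i = p i
  projBi_eq : ∀ i j, s(i, j) ∈ F → projBi θ i j = q i j

theorem isPartialGluing_singleton (d : Pt C) (r : Fin n) (hp : ∀ x, 0 ≤ p r x) :
    IsPartialGluing G p q {r} ∅
      (replaceCoord (fun c => if c = d then 1 else 0) r fun _ => p r) := by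
  refine ⟨replaceCoord_nonneg (fun c => by split_ifs <;> norm_num) fun _ => hp, by simp,
    by simp, by simp, ?_, by simp⟩
  intro i hi
  rw [Finset.mem_singleton.mp hi]
  ext y
  rw [projUni_eq_sum_mul, sum_replaceCoord_mul _ fun _ _ => rfl]
  simp

variable {G p q}

theorem IsPartialGluing.extend {S : Finset (Fin n)} {F : Finset (Sym2 (Fin n))} {θ : Pt C → ℝ}
    (h : IsPartialGluing G p q S F θ) (hq : ∀ i j, G.Adj i j → ∀ z, 0 ≤ q i j z)
    (hrow : ∀ i j, G.Adj i j → ∀ x, ∑ y, q i j (x, y) = p i x)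
    (hsym : ∀ i j, G.Adj i j → ∀ z, q j i z.swap = q i j z)
    {j l : Fin n} (hj : j ∈ S) (hl : l ∉ S) (hadj : G.Adj j l) :
    IsPartialGluing G p q (insert l S) (insert s(j, l) F)
      (replaceCoord θ l (condKernel (p j) (q j l))) := by
  have hjl : j ≠ l := fun h => hl (h ▸ hj)
  have hκ := condKernel_update (p := p j) (q := q j l) hjl
  have hmass := mul_sum_condKernel h.nonneg (h.projUni_eq j hj) (hrow j l hadj)
  have hne : ∀ i ∈ S, i ≠ l := fun i hi h => hl (h ▸ hi)
  have hnew := projBi_replaceCoord_condKernel hjl (h.projUni_eq j hj) (hq j l hadj) (hrow j l hadj)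
  refine ⟨replaceCoord_nonneg h.nonneg fun c x => div_nonneg (hq j l hadj _) ?_, ?_, ?_, ?_,
    ?_, ?_⟩
  · exact h.projUni_eq j hj ▸ projUni_nonneg h.nonneg j (c j)
  · simp only [Finset.forall_mem_insert, SimpleGraph.mem_edgeSet]
    exact ⟨hadj, h.mem_edgeSet⟩
  · simp only [Finset.forall_mem_insert, Sym2.mem_iff]
    refine ⟨?_, fun e he i hi => Finset.mem_insert_of_mem (h.mem_of_mem_edge e he i hi)⟩
    rintro i (rfl | rfl)
    exacts [Finset.mem_insert_of_mem hj, Finset.mem_insert_self _ _]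
  · have hF : s(j, l) ∉ F := fun he => hl (h.mem_of_mem_edge _ he l (Sym2.mem_mk_right _ _))
    rw [Finset.card_insert_of_notMem hF, Finset.card_insert_of_notMem hl, h.card_add_one]
  · simp only [Finset.forall_mem_insert]
    refine ⟨?_, fun i hi => (projUni_replaceCoord_of_ne hκ hmass (hne i hi)).trans
      (h.projUni_eq i hi)⟩
    ext x
    rw [← sum_projBi_left, hnew, ← hrow l j hadj.symm]
    exact Finset.sum_congr rfl fun y _ => hsym l j hadj.symm (x, y)
  · intro i i' he
    rcases Finset.mem_insert.mp he with he | he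
    · rcases Sym2.eq_iff.mp he with ⟨rfl, rfl⟩ | ⟨rfl, rfl⟩
      · exact hnew
      · ext z
        rw [← projBi_swap, hnew, hsym _ _ hadj.symm]
    · rw [projBi_replaceCoord_of_ne hκ hmass
        (hne i (h.mem_of_mem_edge _ he i (Sym2.mem_mk_left _ _)))
        (hne i' (h.mem_of_mem_edge _ he i' (Sym2.mem_mk_right _ _))), h.projBi_eq i i' he]

theorem exists_isPartialGluing (hG : G.Connected) (d : Pt C) (hp : ∀ i x, 0 ≤ p i x)
    (hq : ∀ i j, G.Adj i j → ∀ z, 0 ≤ q i j z)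
    (hrow : ∀ i j, G.Adj i j → ∀ x, ∑ y, q i j (x, y) = p i x)
    (hsym : ∀ i j, G.Adj i j → ∀ z, q j i z.swap = q i j z) :
    ∀ k < n, ∃ S F θ, S.card = k + 1 ∧ IsPartialGluing G p q S F θ := by
  intro k
  induction k with
  | zero =>
    exact fun hn => ⟨{⟨0, hn⟩}, ∅, _, rfl, isPartialGluing_singleton G p q d _ (hp _)⟩
  | succ k ih =>
    intro hk
    obtain ⟨S, F, θ, hS, h⟩ := ih (by omega)
    obtain ⟨u, hu⟩ : S.Nonempty := Finset.card_pos.mp (by omega)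
    obtain ⟨v, hv⟩ : (Sᶜ).Nonempty := by
      rw [← Finset.card_pos, Finset.card_compl, Fintype.card_fin]
      omega
    obtain ⟨e, -, he, he'⟩ :=
      (hG.preconnected u v).some.exists_boundary_dart S hu (Finset.mem_compl.mp hv)
    exact ⟨_, _, _, by rw [Finset.card_insert_of_notMem he', hS],
      h.extend hq hrow hsym he he' e.adj⟩

theorem exists_tree_gluing (hG : G.IsTree) (hC : ∀ i, (C i).Nonempty) (hp : ∀ i x, 0 ≤ p i x)
    (hq : ∀ i j, G.Adj i j → ∀ z, 0 ≤ q i j z)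
    (hrow : ∀ i j, G.Adj i j → ∀ x, ∑ y, q i j (x, y) = p i x)
    (hsym : ∀ i j, G.Adj i j → ∀ z, q j i z.swap = q i j z) :
    ∃ θ : Pt C → ℝ, (∀ c, 0 ≤ θ c) ∧ (∀ i, projUni θ i = p i) ∧
      ∀ i j, G.Adj i j → projBi θ i j = q i j := by
  classical
  have hn : 0 < n := Fin.pos_iff_nonempty.mpr hG.connected.nonempty
  obtain ⟨S, F, θ, hS, h⟩ := exists_isPartialGluing hG.connected
    (fun i => ⟨(hC i).choose, (hC i).choose_spec⟩) hp hq hrow hsym (n - 1) (by omega)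
  have hSuniv : S = Finset.univ := Finset.eq_univ_of_card S (by simp [hS]; omega)
  have hF : F = G.edgeFinset := by
    refine Finset.eq_of_subset_of_card_le (fun e he => ?_) ?_
    · exact SimpleGraph.mem_edgeFinset.mpr (h.mem_edgeSet e he)
    · have := hG.card_edgeFinset
      simp only [Fintype.card_fin] at this
      have := h.card_add_one
      omega
  exact ⟨θ, h.nonneg, fun i => h.projUni_eq i (hSuniv ▸ Finset.mem_univ i),
    fun i j hij => h.projBi_eq i j (hF ▸ SimpleGraph.mem_edgeFinset.mpr hij)⟩

end Gluing

section Program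

variable {n : ℕ} {C : Fin n → Finset ℝ} {K : ℕ}

theorem sum_mul_affine (θ : Pt C → ℝ) (a : Fin n → ℝ) (b : ℝ) :
    ∑ c, θ c * (∑ i, a i * (c i : ℝ) + b) =
      ∑ i, ∑ x : C i, (x : ℝ) * a i * projUni θ i x + b * ∑ c, θ c := by
  have h (i : Fin n) :
      ∑ c, θ c * (a i * (c i : ℝ)) = ∑ x : C i, (x : ℝ) * a i * projUni θ i x := by
    rw [sum_mul_apply_eq_sum_projUni θ i fun x => a i * x]
    exact Finset.sum_congr rfl fun x _ => by ring
  simp only [mul_add, Finset.mul_sum, Finset.sum_add_distrib, ← h, mul_comm _ b]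
  rw [Finset.sum_comm]

theorem le_psi (a : Fin K → Fin n → ℝ) (b : Fin K → ℝ) (c : Pt C) (k : Fin K) :
    ∑ i, a k i * (c i : ℝ) + b k ≤ psi a b c :=
  le_ciSup (f := fun k => ∑ i, a k i * (c i : ℝ) + b k) (Finite.bddAbove_range _) k

theorem exists_psi_eq (hK : 0 < K) (a : Fin K → Fin n → ℝ) (b : Fin K → ℝ) (c : Pt C) :
    ∃ k, psi a b c = ∑ i, a k i * (c i : ℝ) + b k :=
  have : Nonempty (Fin K) := Fin.pos_iff_nonempty.mp hK
  (exists_eq_ciSup_of_finite).imp fun _ h => h.symm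

/-- The objective values of the feasible points of the convex program (cp1). -/
def cpValues (E : Finset (Fin n × Fin n)) (μU : ∀ i, C i → ℝ)
    (μB : ∀ i j, C i × C j → ℝ) (ρ : ℝ) (a : Fin K → Fin n → ℝ) (b : Fin K → ℝ) :
    Set ℝ :=
  {V | ∃ (w : Fin K → ℝ) (v1 : ∀ (_ : Fin K) i, C i → ℝ)
      (v2 : ∀ (_ : Fin K) i j, C i × C j → ℝ),
    (∀ k, 0 ≤ w k) ∧ (∑ k, w k = 1) ∧
    (∀ k, ∀ i j, (i, j) ∈ E → ∀ p, 0 ≤ v2 k i j p) ∧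
    (∀ k, ∀ i j, (i, j) ∈ E → ∀ x, ∑ y, v2 k i j (x, y) = v1 k i x) ∧
    (∀ k, ∀ i j, (i, j) ∈ E → ∀ y, ∑ x, v2 k i j (x, y) = v1 k j y) ∧
    (∀ k i, ∑ x, v1 k i x = w k) ∧
    (∀ k, ∀ i j, (i, j) ∈ E → ∑ p, v2 k i j p = w k) ∧
    (∀ i x, ∑ k, v1 k i x = μU i x) ∧
    (∀ i j, (i, j) ∈ E →
      Vanishes (fun p => ∑ k, v2 k i j p) (μB i j) ∧
        KL (fun p => ∑ k, v2 k i j p) (μB i j) ≤ ρ) ∧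
    V = (∑ k, ∑ i, ∑ x : C i, (x : ℝ) * a k i * v1 k i x) + ∑ k, b k * w k}

def frechetValues (E : Finset (Fin n × Fin n)) (μU : ∀ i, C i → ℝ)
    (μB : ∀ i j, C i × C j → ℝ) (ρ : ℝ) (a : Fin K → Fin n → ℝ) (b : Fin K → ℝ) :
    Set ℝ :=
  {M | ∃ θ : Pt C → ℝ, InTheta E μU μB ρ θ ∧ M = ∑ c, θ c * psi a b c}

variable {E : Finset (Fin n × Fin n)} {μU : ∀ i, C i → ℝ}
  {μB : ∀ i j, C i × C j → ℝ} {ρ : ℝ}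

theorem mem_cpValues_of_inTheta (hK : 0 < K) (a : Fin K → Fin n → ℝ) (b : Fin K → ℝ)
    {θ : Pt C → ℝ} (hθ : InTheta E μU μB ρ θ) :
    ∑ c, θ c * psi a b c ∈ cpValues E μU μB ρ a b := by
  classical
  obtain ⟨⟨hθ0, hθ1⟩, hθU, hθB⟩ := hθ
  choose κ hκ using exists_psi_eq hK a b (C := C)
  set θk : Fin K → Pt C → ℝ := fun k c => if κ c = k then θ c else 0
  have hθk0 : ∀ k c, 0 ≤ θk k c := fun k c => by
    simp only [θk]; split_ifs; exacts [hθ0 c, le_rfl]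
  have hsum : ∀ c, ∑ k, θk k c = θ c := fun c => by simp [θk]
  refine ⟨fun k => ∑ c, θk k c, fun k => projUni (θk k), fun k => projBi (θk k),
    fun k => Finset.sum_nonneg fun c _ => hθk0 k c, ?_,
    fun k i j _ => projBi_nonneg (hθk0 k) i j, fun k i j _ => sum_projBi_right _ i j,
    fun k i j _ => sum_projBi_left _ i j, fun k i => sum_projUni _ i,
    fun k i j _ => sum_projBi _ i j, fun i x => ?_, fun i j hij => ?_, ?_⟩
  · rw [Finset.sum_comm, ← hθ1]
    exact Finset.sum_congr rfl fun c _ => hsum c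
  · rw [← hθU, ← funext hsum, projUni_sum]
  · have h := hθB i j hij
    rwa [← funext hsum, projBi_sum] at h
  · calc ∑ c, θ c * psi a b c = ∑ k, ∑ c, θk k c * (∑ i, a k i * (c i : ℝ) + b k) := by
          rw [Finset.sum_comm]
          exact Finset.sum_congr rfl fun c _ => by simp [θk, hκ]
      _ = _ := by simp only [sum_mul_affine, Finset.sum_add_distrib]

/-- `v` is prescribed only on the pairs of `E`; `orient` extends it to both orientations of each
edge of `treeGraph E`. -/
def orient (E : Finset (Fin n × Fin n)) (v : ∀ i j, C i × C j → ℝ) (i j : Fin n)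
    (z : C i × C j) : ℝ :=
  if (i, j) ∈ E then v i j z else v j i z.swap

theorem treeGraph_adj_of_mem (hE : ∀ e ∈ E, e.1 < e.2) {i j : Fin n} (hij : (i, j) ∈ E) :
    (treeGraph E).Adj i j :=
  SimpleGraph.fromRel_adj _ _ _ |>.mpr ⟨(hE _ hij).ne, Or.inl hij⟩

section Orient

variable {v : ∀ i j, C i × C j → ℝ} {i j : Fin n}

theorem orient_of_mem (hij : (i, j) ∈ E) : orient E v i j = v i j := by
  ext z; simp [orient, hij]

theorem orient_swap (hE : ∀ e ∈ E, e.1 < e.2) (hij : (treeGraph E).Adj i j) (z : C i × C j) :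
    orient E v j i z.swap = orient E v i j z := by
  rcases ((SimpleGraph.fromRel_adj _ _ _).mp hij).2 with h | h
  · have h' : (j, i) ∉ E := fun h' => (hE _ h).not_gt (hE _ h')
    simp [orient, h, h']
  · have h' : (i, j) ∉ E := fun h' => (hE _ h).not_gt (hE _ h')
    simp [orient, h, h']

theorem orient_nonneg (hv : ∀ i j, (i, j) ∈ E → ∀ z, 0 ≤ v i j z)
    (hij : (treeGraph E).Adj i j) (z : C i × C j) : 0 ≤ orient E v i j z := by
  unfold orient
  split_ifs with h
  · exact hv i j h z
  · exact hv j i (((SimpleGraph.fromRel_adj _ _ _).mp hij).2.resolve_left h) _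

theorem sum_orient {p : ∀ i, C i → ℝ}
    (hrow : ∀ i j, (i, j) ∈ E → ∀ x, ∑ y, v i j (x, y) = p i x)
    (hcol : ∀ i j, (i, j) ∈ E → ∀ y, ∑ x, v i j (x, y) = p j y)
    (hij : (treeGraph E).Adj i j) (x : C i) : ∑ y, orient E v i j (x, y) = p i x := by
  unfold orient
  split_ifs with h
  · exact hrow i j h x
  · exact hcol j i (((SimpleGraph.fromRel_adj _ _ _).mp hij).2.resolve_left h) x

end Orient

theorem exists_mem_frechetValues_ge (hn : 2 ≤ n) (hC : ∀ i, (C i).Nonempty)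
    (hE : IsTreeEdges E) (a : Fin K → Fin n → ℝ) (b : Fin K → ℝ) {V : ℝ}
    (hV : V ∈ cpValues E μU μB ρ a b) : ∃ M ∈ frechetValues E μU μB ρ a b, V ≤ M := by
  obtain ⟨w, v1, v2, hw0, hw1, hv0, hrow, hcol, hv1, -, hμ, hB, rfl⟩ := hV
  have : Nontrivial (Fin n) := Fin.nontrivial_iff_two_le.mpr hn
  have hp : ∀ k i x, 0 ≤ v1 k i x := by
    intro k i x
    obtain ⟨j, hij⟩ := hE.2.connected.preconnected.exists_adj_of_nontrivial i
    rw [← sum_orient (hrow k) (hcol k) hij]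
    exact Finset.sum_nonneg fun y _ => orient_nonneg (hv0 k) hij _
  choose Θ hΘ0 hΘU hΘB using fun k => exists_tree_gluing hE.2 hC (hp k)
    (fun i j hij => orient_nonneg (hv0 k) hij) (fun i j hij => sum_orient (hrow k) (hcol k) hij)
    (fun i j hij => orient_swap hE.1 hij)
  have hmass : ∀ k, ∑ c, Θ k c = w k := fun k => by
    rw [← sum_projUni _ ⟨0, by omega⟩, hΘU, hv1]
  have hΘsum0 (c : Pt C) : 0 ≤ ∑ k, Θ k c := Finset.sum_nonneg fun k _ => hΘ0 k c
  refine ⟨_, ⟨fun c => ∑ k, Θ k c, ⟨⟨hΘsum0, ?_⟩, fun i => ?_, fun i j hij => ?_⟩, rfl⟩, ?_⟩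
  · rw [Finset.sum_comm]
    simp [hmass, hw1]
  · ext x
    simp [projUni_sum, hΘU, hμ]
  · simp_rw [projBi_sum, hΘB _ _ _ (treeGraph_adj_of_mem hE.1 hij), orient_of_mem hij]
    exact hB i j hij
  · calc _ = ∑ k, ∑ c, Θ k c * (∑ i, a k i * (c i : ℝ) + b k) := by
          simp only [sum_mul_affine, hΘU, hmass, Finset.sum_add_distrib]
      _ ≤ ∑ k, ∑ c, Θ k c * psi a b c := by
          gcongr with k _ c _
          exacts [hΘ0 k c, le_psi a b c k]
      _ = _ := by
          rw [Finset.sum_comm]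
          simp [Finset.sum_mul]

end Program

theorem stmt2_general
    (n : ℕ) (hn : 2 ≤ n) (C : Fin n → Finset ℝ) (hC : ∀ i, (C i).Nonempty)
    (E : Finset (Fin n × Fin n)) (hE : IsTreeEdges E)
    (μU : (i : Fin n) → {x : ℝ // x ∈ C i} → ℝ)
    (μB : (i j : Fin n) → ({x : ℝ // x ∈ C i} × {y : ℝ // y ∈ C j}) → ℝ)
    (ρ : ℝ)
    (K : ℕ) (hK : 1 ≤ K) (a : Fin K → Fin n → ℝ) (b : Fin K → ℝ) :
    sSup {V : ℝ |
      ∃ (w : Fin K → ℝ)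
        (v1 : (k : Fin K) → (i : Fin n) → {x : ℝ // x ∈ C i} → ℝ)
        (v2 : (k : Fin K) → (i j : Fin n) →
          ({x : ℝ // x ∈ C i} × {y : ℝ // y ∈ C j}) → ℝ),
        (∀ k, 0 ≤ w k) ∧ (∑ k, w k = 1) ∧
        (∀ k, ∀ i j, (i, j) ∈ E → ∀ p, 0 ≤ v2 k i j p) ∧
        (∀ k, ∀ i j, (i, j) ∈ E → ∀ x : {x : ℝ // x ∈ C i},
          ∑ y : {y : ℝ // y ∈ C j}, v2 k i j (x, y) = v1 k i x) ∧
        (∀ k, ∀ i j, (i, j) ∈ E → ∀ y : {y : ℝ // y ∈ C j},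
          ∑ x : {x : ℝ // x ∈ C i}, v2 k i j (x, y) = v1 k j y) ∧
        (∀ k, ∀ i, ∑ x : {x : ℝ // x ∈ C i}, v1 k i x = w k) ∧
        (∀ k, ∀ i j, (i, j) ∈ E →
          ∑ p : {x : ℝ // x ∈ C i} × {y : ℝ // y ∈ C j}, v2 k i j p = w k) ∧
        (∀ i, ∀ x : {x : ℝ // x ∈ C i}, ∑ k, v1 k i x = μU i x) ∧
        (∀ i j, (i, j) ∈ E →
          Vanishes (fun p => ∑ k, v2 k i j p) (μB i j) ∧
          KL (fun p => ∑ k, v2 k i j p) (μB i j) ≤ ρ) ∧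
        V = (∑ k, ∑ i, ∑ x : {x : ℝ // x ∈ C i}, (x : ℝ) * a k i * v1 k i x) +
            ∑ k, b k * w k} =
    sSup {M : ℝ | ∃ θ : Pt C → ℝ, InTheta E μU μB ρ θ ∧
        M = ∑ c : Pt C, θ c * psi a b c} :=
  csSup_eq_csSup_of_forall_exists_le (fun _ hV => exists_mem_frechetValues_ge hn hC hE a b hV)
    fun _ ⟨_, hθ, hM⟩ => ⟨_, hM ▸ mem_cpValues_of_inTheta hK a b hθ, le_rfl⟩

/-- Theorem 3.2: when the bivariate information forms a tree, the optimal value of the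
polynomial-sized convex program (cp1) equals the Fréchet bound `sup_{θ ∈ Θ_ρ} E_θ[ψ]`. -/
theorem stmt2
    (n : ℕ) (hn : 2 ≤ n) (C : Fin n → Finset ℝ) (hC : ∀ i, (C i).Nonempty)
    (E : Finset (Fin n × Fin n)) (hE : IsTreeEdges E)
    (μU : (i : Fin n) → {x : ℝ // x ∈ C i} → ℝ) (hμU : ∀ i, IsPmf (μU i))
    (μB : (i j : Fin n) → ({x : ℝ // x ∈ C i} × {y : ℝ // y ∈ C j}) → ℝ)
    (hμB : ∀ i j, (i, j) ∈ E → IsPmf (μB i j))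
    (ρ : ℝ) (hρ : 0 ≤ ρ)
    (K : ℕ) (hK : 1 ≤ K) (a : Fin K → Fin n → ℝ) (b : Fin K → ℝ) :
    sSup {V : ℝ |
      ∃ (w : Fin K → ℝ)
        (v1 : (k : Fin K) → (i : Fin n) → {x : ℝ // x ∈ C i} → ℝ)
        (v2 : (k : Fin K) → (i j : Fin n) →
          ({x : ℝ // x ∈ C i} × {y : ℝ // y ∈ C j}) → ℝ),
        (∀ k, 0 ≤ w k) ∧ (∑ k, w k = 1) ∧
        (∀ k, ∀ i j, (i, j) ∈ E → ∀ p, 0 ≤ v2 k i j p) ∧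
        (∀ k, ∀ i j, (i, j) ∈ E → ∀ x : {x : ℝ // x ∈ C i},
          ∑ y : {y : ℝ // y ∈ C j}, v2 k i j (x, y) = v1 k i x) ∧
        (∀ k, ∀ i j, (i, j) ∈ E → ∀ y : {y : ℝ // y ∈ C j},
          ∑ x : {x : ℝ // x ∈ C i}, v2 k i j (x, y) = v1 k j y) ∧
        (∀ k, ∀ i, ∑ x : {x : ℝ // x ∈ C i}, v1 k i x = w k) ∧
        (∀ k, ∀ i j, (i, j) ∈ E →
          ∑ p : {x : ℝ // x ∈ C i} × {y : ℝ // y ∈ C j}, v2 k i j p = w k) ∧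
        (∀ i, ∀ x : {x : ℝ // x ∈ C i}, ∑ k, v1 k i x = μU i x) ∧
        (∀ i j, (i, j) ∈ E →
          Vanishes (fun p => ∑ k, v2 k i j p) (μB i j) ∧
          KL (fun p => ∑ k, v2 k i j p) (μB i j) ≤ ρ) ∧
        V = (∑ k, ∑ i, ∑ x : {x : ℝ // x ∈ C i}, (x : ℝ) * a k i * v1 k i x) +
            ∑ k, b k * w k} =
    sSup {M : ℝ | ∃ θ : Pt C → ℝ, InTheta E μU μB ρ θ ∧
        M = ∑ c : Pt C, θ c * psi a b c} :=
  stmt2_general n hn C hC E hE μU μB ρ K hK a b
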